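/- arXiv:2011.06446 — 4 statements merged into one kernel-verified Lean document; each statement's English description precedes it below -/
import Mathlib

section
/- Let n be a prime with n ≥ 2d+1 and z = (z_1,...,z_d) with 1 ≤ z_t ≤ n-1 and all z_t distinct. For the rank-1 lattice x_i = (i·z mod n)/n, the minimum pairwise l1 toroidal distance is at most (n+1)d/(4n). -/
/-- The i-th point of the rank-1 lattice with n points and generating vector z. -/
noncomputable def latticePoint (n d : ℕ) (z : Fin d → ℕ) (i : ℕ) : Fin d → ℝ :=
  fun t => ((i * z t) % n : ℕ) / n

/-- The l1-norm-based toroidal distance on [0,1)^d. -/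
noncomputable def torDist1 {d : ℕ} (x y : Fin d → ℝ) : ℝ :=
  ∑ t, min |x t - y t| (1 - |x t - y t|)

/-!
The minimum of a finite family of numbers is at most their average, so it suffices to average the
distance from `x_k` to `x_0` over `k = 1, …, n - 1`. In coordinate `t` this distance is
`min(r, n - r) / n` with `r = k z_t mod n`; since `z_t` is a unit mod `n`, `k ↦ k z_t mod n`
permutes the residues, so the coordinate sums are all `∑_{r < n} min(r, n - r) = (n² - 1) / 4`
for odd `n`, and the average over the `n - 1` nonzero `k` is `d (n + 1) / (4 n)`.
-/

open Finset

theorem Nat.sum_range_comp_mul_mod {M : Type*} [AddCommMonoid M] {n a : ℕ} (ha : n.Coprime a)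
    (f : ℕ → M) : ∑ k ∈ range n, f (k * a % n) = ∑ k ∈ range n, f k := by
  have hmaps : Set.MapsTo (fun k => k * a % n) (range n) (range n) := fun k hk =>
    mem_range.2 (Nat.mod_lt _ (pos_of_ne_zero (by rintro rfl; simp at hk)))
  have hinj : Set.InjOn (fun k => k * a % n) (range n) := fun k hk l hl hkl => by
    have := Nat.ModEq.cancel_right_of_coprime ha hkl
    rwa [Nat.ModEq, Nat.mod_eq_of_lt (mem_range.1 hk), Nat.mod_eq_of_lt (mem_range.1 hl)] at this
  exact sum_nbij _ hmaps hinj (surjOn_of_injOn_of_card_le _ hmaps hinj le_rfl) fun _ _ => rfl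

theorem sum_range_min_sub_odd (h : ℕ) :
    ∑ k ∈ range (2 * h + 1), min k (2 * h + 1 - k) = h * (h + 1) := by
  have hupper : ∑ k ∈ range h, min (h + 1 + k) (2 * h + 1 - (h + 1 + k))
      = ∑ k ∈ range (h + 1), k := by
    rw [sum_range_succ', ← sum_range_reflect]
    exact sum_congr rfl fun k hk => by have := mem_range.1 hk; omega
  have hgauss := sum_range_id_mul_two (h + 1)
  rw [show 2 * h + 1 = (h + 1) + h by ring, sum_range_add,
    show h + 1 + h = 2 * h + 1 by ring, hupper,
    sum_congr rfl fun k hk => min_eq_left (by have := mem_range.1 hk; omega)]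
  simp only [add_tsub_cancel_right] at hgauss
  linarith

@[simp]
theorem torDist1_self {d : ℕ} (x : Fin d → ℝ) : torDist1 x x = 0 := by
  simp [torDist1]

theorem torDist1_latticePoint_zero {n d : ℕ} (hn : 0 < n) (z : Fin d → ℕ) (k : ℕ) :
    torDist1 (latticePoint n d z k) (latticePoint n d z 0)
      = ∑ t, ((min (k * z t % n) (n - k * z t % n) : ℕ) : ℝ) / n := by
  refine sum_congr rfl fun t _ => ?_
  have hlt : k * z t % n < n := Nat.mod_lt _ hn
  have hsub : (1 : ℝ) - ((k * z t % n : ℕ) : ℝ) / n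
      = ((n - k * z t % n : ℕ) : ℝ) / n := by
    rw [Nat.cast_sub hlt.le]
    field_simp
  simp only [latticePoint, zero_mul, Nat.zero_mod, Nat.cast_zero, zero_div, sub_zero]
  rw [abs_of_nonneg (by positivity), hsub, Nat.cast_min, min_div_div_right (by positivity)]

theorem sum_torDist1_latticePoint_zero {h d : ℕ} (z : Fin d → ℕ)
    (hz : ∀ t, (2 * h + 1).Coprime (z t)) :
    ∑ k ∈ range (2 * h + 1),
        torDist1 (latticePoint (2 * h + 1) d z k) (latticePoint (2 * h + 1) d z 0)
      = d * (h * (h + 1)) / (2 * h + 1 : ℕ) := by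
  have hcoord : ∀ t, ∑ k ∈ range (2 * h + 1),
      ((min (k * z t % (2 * h + 1)) (2 * h + 1 - k * z t % (2 * h + 1)) : ℕ) : ℝ)
        = h * (h + 1) := fun t => by
    rw [Nat.sum_range_comp_mul_mod (hz t) fun r => ((min r (2 * h + 1 - r) : ℕ) : ℝ)]
    exact_mod_cast sum_range_min_sub_odd h
  simp only [torDist1_latticePoint_zero (Nat.succ_pos _)]
  rw [sum_comm]
  simp only [← sum_div, hcoord, sum_const, card_univ, Fintype.card_fin, nsmul_eq_mul]

theorem stmt8_general (n d : ℕ) (hn : n.Prime) (hnd : 2 * d + 1 ≤ n) (z : Fin d → ℕ)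
    (hz : ∀ t, 1 ≤ z t ∧ z t ≤ n - 1) :
    ∃ i < n, ∃ j < n, i ≠ j ∧
      torDist1 (latticePoint n d z i) (latticePoint n d z j) ≤
        ((n : ℝ) + 1) * d / (4 * n) := by
  rcases Nat.eq_zero_or_pos d with rfl | hd
  · exact ⟨1, hn.one_lt, 0, hn.pos, one_ne_zero, by simp [torDist1]⟩
  obtain ⟨h, rfl⟩ := hn.odd_of_ne_two (by omega)
  have hcop : ∀ t, (2 * h + 1).Coprime (z t) := fun t =>
    hn.coprime_iff_not_dvd.2 fun hdvd => by
      have := Nat.le_of_dvd (hz t).1 hdvd; have := (hz t).2; omega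
  have hsum := sum_torDist1_latticePoint_zero z hcop
  rw [sum_range_succ', torDist1_self, add_zero] at hsum
  have havg : ∑ k ∈ range (2 * h), torDist1 (latticePoint (2 * h + 1) d z (k + 1))
      (latticePoint (2 * h + 1) d z 0)
        = ∑ _k ∈ range (2 * h),
            ((2 * h + 1 : ℕ) + 1 : ℝ) * d / (4 * (2 * h + 1 : ℕ)) := by
    rw [hsum, sum_const, card_range, nsmul_eq_mul]
    push_cast
    field_simp
    ring
  obtain ⟨k, hk, hle⟩ := exists_le_of_sum_le (nonempty_range_iff.2 (by omega)) havg.le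
  exact ⟨k + 1, by have := mem_range.1 hk; omega, 0, by omega, by omega, hle⟩

/-- For a non-degenerate rank-1 lattice with n ≥ 2d+1 prime, the minimum pairwise
l1 toroidal distance is at most (n+1)d/(4n). -/
theorem stmt8 (n d : ℕ) (hn : n.Prime) (hnd : 2 * d + 1 ≤ n) (z : Fin d → ℕ)
    (hz : ∀ t, 1 ≤ z t ∧ z t ≤ n - 1) (hinj : Function.Injective z) :
    ∃ i < n, ∃ j < n, i ≠ j ∧
      torDist1 (latticePoint n d z i) (latticePoint n d z j) ≤
        ((n : ℝ) + 1) * d / (4 * n) :=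
  stmt8_general n d hn hnd z hz
end

section
/- Let n be a prime with n ≥ 2d+1 and z with distinct components 1 ≤ z_t ≤ n-1. For the rank-1 lattice x_i = (i·z mod n)/n, the minimum pairwise l2 toroidal distance is at most sqrt((n+1)d/(12n)). -/
/-- The l2-norm-based toroidal distance on [0,1)^d. -/
noncomputable def torDist2 {d : ℕ} (x y : Fin d → ℝ) : ℝ :=
  Real.sqrt (∑ t, (min |x t - y t| (1 - |x t - y t|)) ^ 2)

open Finset

-- The squared distance from `a / n` to `0` on `ℝ/ℤ`, meaningful for `a ≤ n`.
noncomputable def circleDistSq (n a : ℕ) : ℝ := min ((a : ℝ) / n) (1 - a / n) ^ 2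

lemma circleDistSq_zero (n : ℕ) : circleDistSq n 0 = 0 := by simp [circleDistSq]

lemma circleDistSq_eq_div {n a : ℕ} (ha : a ≤ n) :
    circleDistSq n a = ((min a (n - a) : ℕ) : ℝ) ^ 2 / (n : ℝ) ^ 2 := by
  rcases n.eq_zero_or_pos with rfl | hn
  · simp [circleDistSq]
  have hn' : (0 : ℝ) < n := by exact_mod_cast hn
  have h : (1 : ℝ) - a / n = ((n - a : ℕ) : ℝ) / n := by
    rw [Nat.cast_sub ha]; field_simp
  rw [circleDistSq, h, min_div_div_right hn'.le, Nat.cast_min, div_pow]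

lemma sum_range_sq_mul_six (M : ℕ) :
    6 * ∑ i ∈ range (M + 1), i ^ 2 = M * (M + 1) * (2 * M + 1) := by
  induction M with
  | zero => simp
  | succ m ih => rw [sum_range_succ, Nat.mul_add, ih]; ring

lemma sum_range_min_sub_sq (M : ℕ) :
    ∑ a ∈ range (2 * M + 1), min a (2 * M + 1 - a) ^ 2 = 2 * ∑ i ∈ range (M + 1), i ^ 2 := by
  have hlow : ∑ a ∈ range (M + 1), min a (2 * M + 1 - a) ^ 2 = ∑ i ∈ range (M + 1), i ^ 2 :=
    sum_congr rfl fun a ha => by rw [min_eq_left (by grind)]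
  have hhigh : ∑ x ∈ range M, min (M + 1 + x) (2 * M + 1 - (M + 1 + x)) ^ 2
      = ∑ i ∈ range (M + 1), i ^ 2 := by
    rw [sum_range_succ', ← sum_range_reflect]
    exact sum_congr rfl fun x hx => by rw [min_eq_right (by omega)]; grind
  have hsplit := sum_range_add (fun a => min a (2 * M + 1 - a) ^ 2) (M + 1) M
  rw [show M + 1 + M = 2 * M + 1 by ring] at hsplit
  rw [hsplit, hlow, hhigh, two_mul]

lemma sum_circleDistSq_of_odd {n : ℕ} (hn : Odd n) :
    ∑ a ∈ range n, circleDistSq n a = ((n : ℝ) ^ 2 - 1) / (12 * n) := by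
  obtain ⟨M, rfl⟩ := hn
  have key : (3 * ∑ a ∈ range (2 * M + 1), min a (2 * M + 1 - a) ^ 2 : ℕ)
      = M * (M + 1) * (2 * M + 1) := by
    have := sum_range_sq_mul_six M
    rw [sum_range_min_sub_sq]; omega
  rw [sum_congr rfl fun a ha => circleDistSq_eq_div (mem_range.mp ha).le, ← sum_div]
  have hR : (3 : ℝ) * ∑ a ∈ range (2 * M + 1), ((min a (2 * M + 1 - a) : ℕ) : ℝ) ^ 2
      = M * (M + 1) * (2 * M + 1) := by exact_mod_cast key
  push_cast at hR ⊢
  rw [div_eq_div_iff (by positivity) (by positivity)]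
  linear_combination (4 * (2 * (M : ℝ) + 1)) * hR

lemma sum_range_mul_mod_of_coprime {M : Type*} [AddCommMonoid M] {n c : ℕ} (hc : c.Coprime n)
    (f : ℕ → M) : ∑ k ∈ range n, f (k * c % n) = ∑ a ∈ range n, f a := by
  rcases n.eq_zero_or_pos with rfl | hn
  · simp
  have hmaps : Set.MapsTo (· * c % n) (range n : Set ℕ) (range n) :=
    fun k _ => mem_range.mpr (Nat.mod_lt _ hn)
  have hinj : Set.InjOn (· * c % n) (range n : Set ℕ) := fun k hk l hl hkl =>
    Nat.ModEq.eq_of_lt_of_lt (Nat.ModEq.cancel_right_of_coprime (Nat.coprime_comm.mp hc) hkl)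
      (mem_range.mp hk) (mem_range.mp hl)
  exact sum_nbij _ hmaps hinj (surjOn_of_injOn_of_card_le _ hmaps hinj le_rfl) fun _ _ => rfl

lemma torDist2_latticePoint_zero (n d : ℕ) (z : Fin d → ℕ) (k : ℕ) :
    torDist2 (latticePoint n d z k) (latticePoint n d z 0) =
      √(∑ t, circleDistSq n (k * z t % n)) := by
  unfold torDist2 latticePoint circleDistSq
  simp only [zero_mul, Nat.zero_mod, Nat.cast_zero, zero_div, sub_zero]
  congr 1
  exact sum_congr rfl fun t _ => by rw [abs_of_nonneg (by positivity)]

theorem stmt10_general (n d : ℕ) (hn : n.Prime) (hnd : 2 * d + 1 ≤ n) (z : Fin d → ℕ)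
    (hz : ∀ t, 1 ≤ z t ∧ z t ≤ n - 1) :
    ∃ i < n, ∃ j < n, i ≠ j ∧
      torDist2 (latticePoint n d z i) (latticePoint n d z j) ≤
        Real.sqrt (((n : ℝ) + 1) * d / (12 * n)) := by
  have hcol : ∀ t, ∑ k ∈ Ico 1 n, circleDistSq n (k * z t % n)
      = ((n : ℝ) ^ 2 - 1) / (12 * n) := by
    intro t
    have hodd : Odd n := hn.odd_of_ne_two (by have := t.pos; omega)
    have hcop : (z t).Coprime n :=
      (Nat.coprime_of_lt_prime (by grind) (by grind [hn.pos]) hn).symm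
    rw [← sum_circleDistSq_of_odd hodd, ← sum_range_mul_mod_of_coprime hcop, range_eq_Ico,
      sum_eq_sum_Ico_succ_bot hn.pos, zero_mul, Nat.zero_mod, circleDistSq_zero, zero_add]
  have htot : ∑ k ∈ Ico 1 n, ∑ t, circleDistSq n (k * z t % n)
      = ∑ _k ∈ Ico 1 n, ((n : ℝ) + 1) * d / (12 * n) := by
    have hn1 : ((n - 1 : ℕ) : ℝ) = n - 1 := by rw [Nat.cast_sub hn.one_lt.le, Nat.cast_one]
    rw [sum_comm, sum_congr rfl fun t _ => hcol t]
    simp only [sum_const, card_univ, Fintype.card_fin, Nat.card_Ico, nsmul_eq_mul, hn1]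
    have : (n : ℝ) ≠ 0 := by exact_mod_cast hn.ne_zero
    field_simp
    ring
  obtain ⟨k, hk, hkB⟩ := exists_le_of_sum_le ⟨1, mem_Ico.mpr ⟨le_rfl, hn.one_lt⟩⟩ htot.le
  obtain ⟨hk1, hkn⟩ := mem_Ico.mp hk
  refine ⟨k, hkn, 0, hn.pos, by omega, ?_⟩
  rw [torDist2_latticePoint_zero]
  exact Real.sqrt_le_sqrt hkB

/-- For a non-degenerate rank-1 lattice with n ≥ 2d+1 prime, the minimum pairwise
l2 toroidal distance is at most sqrt((n+1)d/(12n)). -/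
theorem stmt10 (n d : ℕ) (hn : n.Prime) (hnd : 2 * d + 1 ≤ n) (z : Fin d → ℕ)
    (hz : ∀ t, 1 ≤ z t ∧ z t ≤ n - 1) (hinj : Function.Injective z) :
    ∃ i < n, ∃ j < n, i ≠ j ∧
      torDist2 (latticePoint n d z i) (latticePoint n d z j) ≤
        Real.sqrt (((n : ℝ) + 1) * d / (12 * n)) :=
  stmt10_general n d hn hnd z hz
end

section
/- Suppose n = 2d+1 is prime and z_t = g^(t-1) mod n for a primitive root g mod n. For the rank-1 lattice x_i = (i·z mod n)/n, every pair of distinct points has the same l2 toroidal distance, equal to sqrt(d(d+1)(2d+1)/6)/n = sqrt((n+1)d/(12n)). -/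
open Finset

theorem sum_Icc_sq_mul_six (d : ℕ) : (∑ x ∈ Icc 1 d, x ^ 2) * 6 = d * (d + 1) * (2 * d + 1) := by
  induction d with
  | zero => simp
  | succ k ih =>
    rw [sum_Icc_succ_top (by omega), add_mul, ih]
    ring

theorem min_abs_div_sub_div_eq_natAbs_valMinAbs {n a b : ℕ} (ha : a < n) (hb : b < n) :
    min |(a : ℝ) / n - b / n| (1 - |(a : ℝ) / n - b / n|) =
      (((a : ZMod n) - b).valMinAbs.natAbs : ℝ) / n := by
  wlog hba : b ≤ a generalizing a b
  · rw [abs_sub_comm, this hb ha (by omega), ← ZMod.natAbs_valMinAbs_neg, neg_sub]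
  have : NeZero n := ⟨by omega⟩
  have hn : (0 : ℝ) < n := Nat.cast_pos.mpr (by omega)
  have hdist : |(a : ℝ) / n - b / n| = ((a - b : ℕ) : ℝ) / n := by
    rw [← sub_div, abs_div, abs_of_pos hn, Nat.cast_sub hba, abs_of_nonneg (by simpa using hba)]
  rw [hdist, ← Nat.cast_sub (R := ZMod n) hba, ZMod.valMinAbs_natAbs_eq_min,
    ZMod.val_natCast_of_lt (by omega), Nat.cast_min, ← min_div_div_right hn.le,
    Nat.cast_sub (by omega : a - b ≤ n), sub_div, div_self hn.ne']

theorem torDist2_latticePoint {n d : ℕ} (hn : 0 < n) (z : Fin d → ℕ) (i j : ℕ) :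
    torDist2 (latticePoint n d z i) (latticePoint n d z j) =
      √(∑ t, ((((i - j : ZMod n) * z t).valMinAbs.natAbs : ℝ) / n) ^ 2) := by
  unfold torDist2 latticePoint
  congr! 3 with t
  rw [min_abs_div_sub_div_eq_natAbs_valMinAbs (Nat.mod_lt _ hn) (Nat.mod_lt _ hn)]
  simp only [ZMod.natCast_mod, Nat.cast_mul, sub_mul]

theorem pow_eq_neg_one_of_orderOf_eq_two_mul {R : Type*} [CommRing R] [NoZeroDivisors R]
    {g : Rˣ} {d : ℕ} (hd : d ≠ 0) (hg : orderOf g = 2 * d) : (g : R) ^ d = -1 := by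
  have h := (IsPrimitiveRoot.coe_units_iff.mpr (hg ▸ IsPrimitiveRoot.orderOf g)).pow_of_dvd hd
    (dvd_mul_left d 2)
  rw [Nat.mul_div_cancel _ (Nat.pos_of_ne_zero hd)] at h
  exact h.eq_neg_one_of_two_right

theorem injOn_natAbs_valMinAbs_mul_pow {p d : ℕ} [Fact p.Prime] {g : (ZMod p)ˣ}
    (hg : orderOf g = 2 * d) {k : ZMod p} (hk : k ≠ 0) :
    Set.InjOn (fun t ↦ (k * (g : ZMod p) ^ t).valMinAbs.natAbs) (Set.Iio d) := by
  intro s hs t ht hst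
  simp only [Set.mem_Iio] at hs ht
  have hpow : ∀ {a b : ℕ}, a < 2 * d → b < 2 * d → (g : ZMod p) ^ a = g ^ b → a = b :=
    fun ha hb h ↦ pow_injOn_Iio_orderOf (hg ▸ ha) (hg ▸ hb) (Units.val_injective (by simpa using h))
  rcases ZMod.natAbs_valMinAbs_eq_natAbs_valMinAbs.mp hst with h | h
  · exact hpow (by omega) (by omega) (mul_left_cancel₀ hk h)
  · have hst' : (g : ZMod p) ^ s = g ^ (t + d) := by
      rw [pow_add, pow_eq_neg_one_of_orderOf_eq_two_mul (by omega) hg]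
      exact mul_left_cancel₀ hk (by rw [h]; ring)
    have := hpow (by omega) (by omega) hst'
    omega

theorem image_natAbs_valMinAbs_mul_pow {d : ℕ} [Fact (2 * d + 1).Prime] {g : (ZMod (2 * d + 1))ˣ}
    (hg : orderOf g = 2 * d) {k : ZMod (2 * d + 1)} (hk : k ≠ 0) :
    (range d).image (fun t ↦ (k * (g : ZMod (2 * d + 1)) ^ t).valMinAbs.natAbs) = Icc 1 d := by
  refine eq_of_subset_of_card_le (fun x hx ↦ ?_) ?_
  · obtain ⟨t, -, rfl⟩ := mem_image.mp hx
    have hle := ZMod.natAbs_valMinAbs_le (k * (g : ZMod (2 * d + 1)) ^ t)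
    have hne : (k * (g : ZMod (2 * d + 1)) ^ t).valMinAbs.natAbs ≠ 0 := by
      simpa [ZMod.valMinAbs_eq_zero] using hk
    rw [mem_Icc]
    omega
  · rw [card_image_of_injOn (by simpa using injOn_natAbs_valMinAbs_mul_pow hg hk), Nat.card_Icc, card_range]
    omega

theorem sum_sq_natAbs_valMinAbs_mul_pow {d : ℕ} [Fact (2 * d + 1).Prime]
    {g : (ZMod (2 * d + 1))ˣ} (hg : orderOf g = 2 * d) {k : ZMod (2 * d + 1)} (hk : k ≠ 0) :
    (∑ t : Fin d, (k * (g : ZMod (2 * d + 1)) ^ (t : ℕ)).valMinAbs.natAbs ^ 2) * 6 =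
      d * (d + 1) * (2 * d + 1) := by
  rw [← sum_Icc_sq_mul_six, ← image_natAbs_valMinAbs_mul_pow hg hk,
    sum_image (by simpa using injOn_natAbs_valMinAbs_mul_pow hg hk),
    Fin.sum_univ_eq_sum_range (fun t ↦ (k * (g : ZMod (2 * d + 1)) ^ t).valMinAbs.natAbs ^ 2)]

theorem stmt14_general (d : ℕ) (hp : Nat.Prime (2 * d + 1))
    (g : (ZMod (2 * d + 1))ˣ) (hg : ∀ x : (ZMod (2 * d + 1))ˣ, x ∈ Subgroup.zpowers g) :
    ∀ i < 2 * d + 1, ∀ j < 2 * d + 1, i ≠ j →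
      torDist2
          (latticePoint (2 * d + 1) d (fun t => ((g : ZMod (2 * d + 1)) ^ (t : ℕ)).val) i)
          (latticePoint (2 * d + 1) d (fun t => ((g : ZMod (2 * d + 1)) ^ (t : ℕ)).val) j) =
        Real.sqrt ((d : ℝ) * (d + 1) * (2 * d + 1) / 6) / (2 * d + 1) := by
  intro i hi j hj hij
  have : Fact (2 * d + 1).Prime := ⟨hp⟩
  have horder : orderOf g = 2 * d := by
    rw [orderOf_eq_card_of_forall_mem_zpowers hg, Nat.card_eq_fintype_card, ZMod.card_units]
    omega
  have hk : (i - j : ZMod (2 * d + 1)) ≠ 0 := by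
    rwa [sub_ne_zero, Ne, ZMod.natCast_eq_natCast_iff', Nat.mod_eq_of_lt hi, Nat.mod_eq_of_lt hj]
  have hsum : ((∑ t : Fin d,
      ((i - j : ZMod (2 * d + 1)) * (g : ZMod (2 * d + 1)) ^ (t : ℕ)).valMinAbs.natAbs ^ 2 : ℕ) :
        ℝ) * 6 = d * (d + 1) * (2 * d + 1) := by
    exact_mod_cast sum_sq_natAbs_valMinAbs_mul_pow horder hk
  rw [torDist2_latticePoint (by omega)]
  simp only [ZMod.natCast_zmod_val, div_pow, ← sum_div]
  rw [Real.sqrt_div' _ (by positivity), Real.sqrt_sq (by positivity), ← hsum]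
  push_cast
  rw [mul_div_cancel_right₀ _ (by norm_num : (6 : ℝ) ≠ 0)]

/-- For n = 2d+1 prime and z_t = g^(t-1) mod n with g a primitive root, every pair of
distinct lattice points has l2 toroidal distance exactly sqrt(d(d+1)(2d+1)/6)/n. -/
theorem stmt14 (d : ℕ) (hd : 0 < d) (hp : Nat.Prime (2 * d + 1))
    (g : (ZMod (2 * d + 1))ˣ) (hg : ∀ x : (ZMod (2 * d + 1))ˣ, x ∈ Subgroup.zpowers g) :
    ∀ i < 2 * d + 1, ∀ j < 2 * d + 1, i ≠ j →
      torDist2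
          (latticePoint (2 * d + 1) d (fun t => ((g : ZMod (2 * d + 1)) ^ (t : ℕ)).val) i)
          (latticePoint (2 * d + 1) d (fun t => ((g : ZMod (2 * d + 1)) ^ (t : ℕ)).val) j) =
        Real.sqrt ((d : ℝ) * (d + 1) * (2 * d + 1) / 6) / (2 * d + 1) :=
  stmt14_general d hp g hg
end

section
/- Let n be a prime and H a subgroup of the multiplicative group (Z/nZ)ˣ of order m. Then for every k ∈ {1,...,n-1}, the absolute value of the Gauss-type sum ∑_{z∈H} e^{2πi z k / n} is at most √n. -/
open Complex
open scoped Classical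

/-!
Write `g(a) = ∑_{z ∈ H} ψ(z a)` for a primitive additive character `ψ` of a finite ring `R`.
Orthogonality of characters gives Parseval's identity `∑_a |g(a)|² = |R| |H|`, and `g` is
constant on each orbit `H a`. For a unit `a` this orbit has `|H|` elements, so
`|H| |g(a)|² ≤ |R| |H|`, i.e. `|g(a)| ≤ √|R|`.
-/

open ComplexConjugate

namespace AddChar

variable {R : Type*} [CommRing R] (ψ : AddChar R ℂ) (H : Subgroup Rˣ) [Fintype H]

noncomputable def gaussPeriod (a : R) : ℂ := ∑ z : H, ψ ((z : Rˣ) * a)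

theorem gaussPeriod_units_mul (h : H) (a : R) :
    gaussPeriod ψ H ((h : Rˣ) * a) = gaussPeriod ψ H a := by
  unfold gaussPeriod
  refine Fintype.sum_equiv (Equiv.mulRight h) _ _ fun z => ?_
  simp [mul_assoc]

variable [Fintype R]

theorem gaussPeriod_mul_conj (a : R) :
    gaussPeriod ψ H a * conj (gaussPeriod ψ H a) =
      ∑ z : H, ∑ w : H, ψ (a * ((z : Rˣ) - (w : Rˣ) : R)) := by
  simp only [gaussPeriod, map_sum, Finset.sum_mul_sum, ← map_neg_eq_conj,
    ← map_add_eq_mul]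
  congr! 3
  ring

theorem sum_gaussPeriod_mul_conj (hψ : ψ.IsPrimitive) :
    ∑ a, gaussPeriod ψ H a * conj (gaussPeriod ψ H a) = Fintype.card R * Fintype.card H := by
  have orthogonality (z w : H) :
      ∑ a : R, ψ (a * ((z : Rˣ) - (w : Rˣ) : R)) = if z = w then (Fintype.card R : ℂ) else 0 := by
    simp only [sum_mulShift _ hψ, sub_eq_zero, Units.val_inj, Subtype.coe_inj]
    push_cast; rfl
  simp_rw [gaussPeriod_mul_conj, Finset.sum_comm (γ := R), orthogonality]
  simp [mul_comm]

theorem sum_sq_norm_gaussPeriod (hψ : ψ.IsPrimitive) :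
    ∑ a, ‖gaussPeriod ψ H a‖ ^ 2 = Fintype.card R * Fintype.card H := by
  rw [← Complex.ofReal_inj]
  push_cast
  simp_rw [← Complex.mul_conj']
  exact sum_gaussPeriod_mul_conj ψ H hψ

theorem card_mul_sq_norm_gaussPeriod_le (hψ : ψ.IsPrimitive) (a : Rˣ) :
    Fintype.card H * ‖gaussPeriod ψ H a‖ ^ 2 ≤ Fintype.card R * Fintype.card H := by
  have orbit_injective : Function.Injective fun h : H => ((h * a : Rˣ) : R) :=
    fun h h' hh' => Subtype.ext (mul_right_cancel (Units.val_injective hh'))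
  calc (Fintype.card H : ℝ) * ‖gaussPeriod ψ H a‖ ^ 2
      = ∑ h : H, ‖gaussPeriod ψ H ((h * a : Rˣ) : R)‖ ^ 2 := by
        simp [Units.val_mul, gaussPeriod_units_mul]
    _ = ∑ t ∈ Finset.univ.image fun h : H => ((h * a : Rˣ) : R), ‖gaussPeriod ψ H t‖ ^ 2 := by
        rw [Finset.sum_image fun h _ h' _ hh' => orbit_injective hh']
    _ ≤ ∑ t, ‖gaussPeriod ψ H t‖ ^ 2 :=
        Finset.sum_le_sum_of_subset_of_nonneg (Finset.subset_univ _) fun _ _ _ => by positivity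
    _ = Fintype.card R * Fintype.card H := sum_sq_norm_gaussPeriod ψ H hψ

theorem norm_gaussPeriod_le_sqrt_card (hψ : ψ.IsPrimitive) (a : Rˣ) :
    ‖gaussPeriod ψ H a‖ ≤ Real.sqrt (Fintype.card R) := by
  have hH : (0 : ℝ) < Fintype.card H := by exact_mod_cast Fintype.card_pos
  refine Real.le_sqrt_of_sq_le (le_of_mul_le_mul_left ?_ hH)
  simpa [mul_comm] using card_mul_sq_norm_gaussPeriod_le ψ H hψ a

end AddChar

theorem ZMod.stdAddChar_val_mul_natCast {n : ℕ} [NeZero n] (x : ZMod n) (k : ℕ) :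
    ZMod.stdAddChar (x * (k : ZMod n)) = Complex.exp (2 * Real.pi * I * (x.val : ℂ) * k / n) := by
  have : x * k = ((x.val * k : ℕ) : ℤ) := by push_cast; rw [ZMod.natCast_val, ZMod.cast_id]
  rw [this, ZMod.stdAddChar_coe]
  push_cast
  ring_nf

theorem stmt18_general (n : ℕ) [NeZero n] (hn : n.Prime) (H : Subgroup (ZMod n)ˣ)
    (k : ℕ) (hk1 : 1 ≤ k) (hk2 : k ≤ n - 1) :
    ‖(∑ z : H, Complex.exp (2 * Real.pi * I * (((z : (ZMod n)ˣ) : ZMod n).val : ℂ) * k / n))‖ ≤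
      Real.sqrt n := by
  have : Fact n.Prime := ⟨hn⟩
  have hk : (k : ZMod n) ≠ 0 := by
    rw [Ne, ZMod.natCast_eq_zero_iff]
    exact fun hdvd => by have := Nat.le_of_dvd hk1 hdvd; omega
  have bound := AddChar.norm_gaussPeriod_le_sqrt_card ZMod.stdAddChar H
    (ZMod.isPrimitive_stdAddChar n) (Units.mk0 _ hk)
  simpa only [AddChar.gaussPeriod, Units.val_mk0, ZMod.stdAddChar_val_mul_natCast,
    ZMod.card] using bound

/-- For n prime and H a multiplicative subgroup of (Z/nZ)ˣ of order m, and any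
k ∈ {1,...,n-1}, the exponential sum |∑_{z∈H} e^{2πi z k / n}| is at most √n. -/
theorem stmt18 (n m : ℕ) [NeZero n] (hn : n.Prime) (H : Subgroup (ZMod n)ˣ)
    (hH : Nat.card H = m) (k : ℕ) (hk1 : 1 ≤ k) (hk2 : k ≤ n - 1) :
    ‖(∑ z : H, Complex.exp (2 * Real.pi * I * (((z : (ZMod n)ˣ) : ZMod n).val : ℂ) * k / n))‖ ≤
      Real.sqrt n :=
  stmt18_general n hn H k hk1 hk2
end
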